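/- arXiv:2408.02040 — 4 statements merged into one kernel-verified Lean document; each statement's English description precedes it below -/
import Mathlib

section
/- For every pair of simple reflections s, t ∈ S (not necessarily distinct), the operators μ_s and ∂_t on H commute: μ_s ∘ ∂_t = ∂_t ∘ μ_s. -/
open CoxeterSystem

/-- The martial operator `μ_s` on the free `ℤ`-module with basis `{δ_w : w ∈ W}`:
`μ_s δ_w = δ_{s w}` if `ℓ(s w) < ℓ(w)`, and `0` otherwise. -/
noncomputable def martial {B W : Type*} [Group W] (M : CoxeterMatrix B)
    (cs : CoxeterSystem M W) (i : B) : Module.End ℤ (W →₀ ℤ) :=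
  Finsupp.lsum ℤ fun w =>
    if cs.length (cs.simple i * w) < cs.length w then Finsupp.lsingle (cs.simple i * w) else 0

/-- The divided difference operator `∂_s` on the free `ℤ`-module with basis
`{δ_w : w ∈ W}`: `∂_s δ_w = δ_{w s}` if `ℓ(w s) < ℓ(w)`, and `0` otherwise. -/
noncomputable def partial' {B W : Type*} [Group W] (M : CoxeterMatrix B)
    (cs : CoxeterSystem M W) (i : B) : Module.End ℤ (W →₀ ℤ) :=
  Finsupp.lsum ℤ fun w =>
    if cs.length (w * cs.simple i) < cs.length w then Finsupp.lsingle (w * cs.simple i) else 0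

lemma martial_single {B W : Type*} [Group W] (M : CoxeterMatrix B)
    (cs : CoxeterSystem M W) (i : B) (w : W) (c : ℤ) :
    martial M cs i (Finsupp.single w c) =
      if cs.length (cs.simple i * w) < cs.length w then
        Finsupp.single (cs.simple i * w) c else 0 := by
  rw [martial, Finsupp.lsum_single, apply_ite (fun f : (ℤ →ₗ[ℤ] (W →₀ ℤ)) => f c)]
  simp

lemma partial'_single {B W : Type*} [Group W] (M : CoxeterMatrix B)
    (cs : CoxeterSystem M W) (i : B) (w : W) (c : ℤ) :
    partial' M cs i (Finsupp.single w c) =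
      if cs.length (w * cs.simple i) < cs.length w then
        Finsupp.single (w * cs.simple i) c else 0 := by
  rw [partial', Finsupp.lsum_single, apply_ite (fun f : (ℤ →ₗ[ℤ] (W →₀ ℤ)) => f c)]
  simp

/-- For every pair of simple reflections `s, t` (not necessarily distinct), the
operators `μ_s` and `∂_t` commute: `μ_s ∘ ∂_t = ∂_t ∘ μ_s`. -/
theorem martial_comm_partial
    {B W : Type*} [Group W] (M : CoxeterMatrix B) (cs : CoxeterSystem M W) (i j : B) :
    martial M cs i ∘ₗ partial' M cs j = partial' M cs j ∘ₗ martial M cs i := by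
  apply Finsupp.lhom_ext
  intro w c
  simp only [LinearMap.comp_apply, martial_single, partial'_single, apply_ite,
    map_zero, mul_assoc]
  have h1 := cs.length_simple_mul w i
  have h2 := cs.length_mul_simple w j
  have h3 := cs.length_simple_mul (w * cs.simple j) i
  have h4 := cs.length_mul_simple (cs.simple i * w) j
  rw [mul_assoc] at h4
  split_ifs <;> first | rfl | omega
end

section
/- The operator ∇ = Σ_{i ≥ 1} ∂/∂x_i on ℤ[x₁,x₂,…] (a well-defined operator, since each polynomial involves finitely many variables) commutes with every divided difference operator: ∇ ∘ ∂_i = ∂_i ∘ ∇ for all i ≥ 1. -/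
/-!
`∇` is a derivation that commutes with every permutation of the variables and sends
`xᵢ - xᵢ₊₁` to `0`. Applying it to `(xᵢ - xᵢ₊₁) g = f - sᵢ f` therefore gives
`(xᵢ - xᵢ₊₁) ∇g = ∇f - sᵢ (∇f)`.
-/

open MvPolynomial

/-- The operator `∇ = Σ_{i ≥ 1} ∂/∂xᵢ` on `ℤ[x₁, x₂, …]` (well defined, since each
polynomial involves only finitely many variables). -/
noncomputable def nabla (f : MvPolynomial ℕ+ ℤ) : MvPolynomial ℕ+ ℤ :=
  ∑ᶠ i : ℕ+, pderiv i f

namespace MvPolynomial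

section SumPDeriv

variable {σ τ R : Type*}

theorem hasFiniteSupport_pderiv [CommSemiring R] (f : MvPolynomial σ R) :
    (fun i => pderiv i f).HasFiniteSupport :=
  f.vars.finite_toSet.subset fun i hi => by
    by_contra h
    exact hi (pderiv_eq_zero_of_notMem_vars h)

theorem finsum_pderiv_mul [CommSemiring R] (f g : MvPolynomial σ R) :
    ∑ᶠ i, pderiv i (f * g) = (∑ᶠ i, pderiv i f) * g + f * ∑ᶠ i, pderiv i g := by
  simp only [pderiv_mul]
  rw [finsum_add_distrib ((hasFiniteSupport_pderiv f).fun_mul_left _)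
      ((hasFiniteSupport_pderiv g).fun_mul_right _),
    finsum_mul' _ g (hasFiniteSupport_pderiv f), mul_finsum' _ f (hasFiniteSupport_pderiv g)]

theorem finsum_pderiv_rename [CommSemiring R] (e : σ ≃ τ) (f : MvPolynomial σ R) :
    ∑ᶠ j, pderiv j (rename e f) = rename e (∑ᶠ i, pderiv i f) := by
  rw [← finsum_comp_equiv e, finsum_congr fun i => pderiv_rename e.injective i f]
  exact ((rename e).toLinearMap.toAddMonoidHom.map_finsum (hasFiniteSupport_pderiv f)).symm

theorem finsum_pderiv_sub [CommRing R] (f g : MvPolynomial σ R) :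
    ∑ᶠ i, pderiv i (f - g) = ∑ᶠ i, pderiv i f - ∑ᶠ i, pderiv i g := by
  simp only [map_sub]
  exact finsum_sub_distrib (hasFiniteSupport_pderiv f) (hasFiniteSupport_pderiv g)

theorem finsum_pderiv_X [CommSemiring R] [DecidableEq σ] (i : σ) :
    ∑ᶠ j, pderiv j (X i : MvPolynomial σ R) = 1 := by
  rw [finsum_eq_single _ i fun j hj => pderiv_X_of_ne hj.symm, pderiv_X_self]

theorem finsum_pderiv_X_sub_X [CommRing R] [DecidableEq σ] (i j : σ) :
    ∑ᶠ k, pderiv k (X i - X j : MvPolynomial σ R) = 0 := by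
  rw [finsum_pderiv_sub, finsum_pderiv_X, finsum_pderiv_X, sub_self]

end SumPDeriv

end MvPolynomial

/-- `∇` commutes with every divided difference operator `∂ᵢ`:
if `g = ∂ᵢ f`, encoded denominator-free as `(xᵢ − xᵢ₊₁) g = f − sᵢ f`, then
`∇ g = ∂ᵢ (∇ f)`, i.e. `(xᵢ − xᵢ₊₁) ∇ g = ∇ f − sᵢ (∇ f)`. -/
theorem nabla_comm_divided_difference (i : ℕ+) (f g : MvPolynomial ℕ+ ℤ)
    (hg : (X i - X (i + 1)) * g = f - rename (Equiv.swap i (i + 1)) f) :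
    (X i - X (i + 1)) * nabla g
      = nabla f - rename (Equiv.swap i (i + 1)) (nabla f) := by
  have h := congrArg nabla hg
  simp only [nabla] at h ⊢
  rwa [finsum_pderiv_mul, finsum_pderiv_X_sub_X, zero_mul, zero_add, finsum_pderiv_sub,
    finsum_pderiv_rename] at h
end

section
/- A sequence k : ℤ → ℂ satisfies the Klyachko equations k_m(−k_{m−1} + 2k_m − k_{m+1}) = 0 for all m ∈ ℤ if and only if one of the following holds: (1) there exist a, b ∈ ℂ with k_m = a·m + b for all m ∈ ℤ; or (2) there exist integers i ≤ j and complex numbers x, y such that k_m = x(m − i) for all m ≤ i, k_m = 0 for all i ≤ m ≤ j, and k_m = y(m − j) for all m ≥ j. -/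
/-! Where `k m ≠ 0` the equation says that the second difference of `k` vanishes at `m`, so `k`
is affine across every stretch without zeros. If `k` has no zeros it is affine. Otherwise, past
its last zero `j` (if there is one) the sequence is `k (j + 1) * (m - j)`, which in characteristic
zero never vanishes again, so the zeros form an interval and `k` is linear on each side of it;
the left side follows from the right one by the symmetry `m ↦ -m` of the equation. -/

variable {R : Type*} [CommRing R]

def IsKlyachkoSolution (k : ℤ → R) : Prop :=
  ∀ m : ℤ, k m * (-k (m - 1) + 2 * k m - k (m + 1)) = 0

lemma eq_affine_of_sub_eq_sub {k : ℤ → R} (hk : ∀ m, k (m + 1) - k m = k m - k (m - 1))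
    (m : ℤ) : k m = (k 1 - k 0) * m + k 0 := by
  have hd : ∀ m : ℤ, k (m + 1) - k m = k 1 - k 0 := by
    intro m
    induction m using Int.induction_on with
    | zero => simp
    | succ i ih => rw [hk, add_sub_cancel_right, ih]
    | pred i ih => rw [← ih, hk (-i), sub_add_cancel]
  induction m using Int.induction_on with
  | zero => simp
  | succ i ih => push_cast at ih ⊢; linear_combination hd i + ih
  | pred i ih =>
    have := hd (-i - 1)
    rw [sub_add_cancel] at this
    push_cast at ih ⊢
    linear_combination ih - this

lemma klyachko_eq_of_affine_near {k : ℤ → R} {m : ℤ} (a b : R)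
    (h : ∀ l, m - 1 ≤ l → l ≤ m + 1 → k l = a * l + b) :
    k m * (-k (m - 1) + 2 * k m - k (m + 1)) = 0 := by
  rw [h (m - 1) le_rfl (by omega), h m (by omega) (by omega), h (m + 1) (by omega) le_rfl]
  push_cast
  ring

namespace IsKlyachkoSolution

variable {k : ℤ → R}

lemma comp_neg (hk : IsKlyachkoSolution k) : IsKlyachkoSolution (fun m => k (-m)) := by
  intro m
  dsimp only
  rw [show -(m - 1) = -m + 1 by ring, show -(m + 1) = -m - 1 by ring]
  linear_combination hk (-m)

variable [NoZeroDivisors R]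

lemma sub_eq_sub (hk : IsKlyachkoSolution k) {m : ℤ} (hm : k m ≠ 0) :
    k (m + 1) - k m = k m - k (m - 1) := by
  linear_combination -(mul_eq_zero.1 (hk m)).resolve_left hm

variable [CharZero R]

lemma eq_mul_sub_of_eq_zero_of_ne_zero (hk : IsKlyachkoSolution k) {j : ℤ} (h0 : k j = 0)
    (h1 : k (j + 1) ≠ 0) {m : ℤ} (hm : j ≤ m) : k m = k (j + 1) * (m - j) := by
  suffices ∀ m, j ≤ m → k m = k (j + 1) * (m - j) ∧ k (m + 1) = k (j + 1) * (m + 1 - j) from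
    (this m hm).1
  intro m hm
  induction m, hm using Int.leInduction with
  | base => constructor <;> simp [h0]
  | succ m hjm ih =>
    have hne : k (m + 1) ≠ 0 := by
      rw [ih.2]
      exact mul_ne_zero h1 (by exact_mod_cast (show m + 1 - j ≠ 0 by omega))
    have := hk.sub_eq_sub hne
    rw [add_sub_cancel_right] at this
    push_cast
    exact ⟨ih.2, by linear_combination this + 2 * ih.2 - ih.1⟩

lemma exists_vanishing_then_linear_of_eq_zero (hk : IsKlyachkoSolution k) {n : ℤ}
    (hn : k n = 0) :
    ∃ j, n ≤ j ∧ ∃ y : R,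
      (∀ m, n ≤ m → m ≤ j → k m = 0) ∧ ∀ m, j ≤ m → k m = y * ((m : R) - (j : R)) := by
  by_cases hzero : ∀ m, n ≤ m → k m = 0
  · exact ⟨n, le_rfl, 0, fun m hm _ => hzero m hm, fun m hm => by rw [hzero m hm, zero_mul]⟩
  push Not at hzero
  obtain ⟨l, ⟨hnl, hl⟩, hleast⟩ :=
    Int.exists_least_of_bdd (P := fun m => n ≤ m ∧ k m ≠ 0) ⟨n, fun _ h => h.1⟩ hzero
  have hzero_below : ∀ m, n ≤ m → m < l → k m = 0 := fun m hnm hml =>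
    by_contra fun h => (hleast m ⟨hnm, h⟩).not_gt hml
  have hnl_lt : n < l := lt_of_le_of_ne hnl (by rintro rfl; exact hl hn)
  refine ⟨l - 1, by omega, k l, fun m hnm hml => hzero_below m hnm (by omega), fun m hm => ?_⟩
  have := hk.eq_mul_sub_of_eq_zero_of_ne_zero (hzero_below (l - 1) (by omega) (by omega))
    (by rwa [sub_add_cancel]) hm
  rwa [sub_add_cancel] at this

lemma exists_linear_vanishing_linear_of_eq_zero (hk : IsKlyachkoSolution k) {n : ℤ}
    (hn : k n = 0) :
    ∃ i j : ℤ, i ≤ j ∧ ∃ x y : R,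
      (∀ m : ℤ, m ≤ i → k m = x * ((m : R) - (i : R))) ∧
      (∀ m : ℤ, i ≤ m → m ≤ j → k m = 0) ∧
      (∀ m : ℤ, j ≤ m → k m = y * ((m : R) - (j : R))) := by
  obtain ⟨j, hnj, y, hzero_right, hright⟩ := hk.exists_vanishing_then_linear_of_eq_zero hn
  obtain ⟨i', hni', x', hzero_left, hleft⟩ :=
    hk.comp_neg.exists_vanishing_then_linear_of_eq_zero (n := -n) (by simpa)
  refine ⟨-i', j, by omega, -x', y, fun m hm => ?_, fun m hi hj => ?_, hright⟩
  · have := hleft (-m) (by omega)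
    simp only [neg_neg] at this
    rw [this]
    push_cast
    ring
  · rcases le_total m n with h | h
    · simpa using hzero_left (-m) (by omega) (by omega)
    · exact hzero_right m h hj

end IsKlyachkoSolution

/-- A sequence `k : ℤ → ℂ` satisfies the Klyachko equations
`k_m (−k_{m−1} + 2k_m − k_{m+1}) = 0` for all `m` iff either it is affine-linear
(`k_m = a m + b`), or there are integers `i ≤ j` and slopes `x, y` with
`k_m = x (m − i)` for `m ≤ i`, `k_m = 0` on `[i, j]`, and `k_m = y (m − j)` for
`m ≥ j`. -/
theorem klyachko_solutions (k : ℤ → ℂ) :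
    (∀ m : ℤ, k m * (-k (m - 1) + 2 * k m - k (m + 1)) = 0) ↔
      ((∃ a b : ℂ, ∀ m : ℤ, k m = a * (m : ℂ) + b) ∨
        (∃ i j : ℤ, i ≤ j ∧ ∃ x y : ℂ,
          (∀ m : ℤ, m ≤ i → k m = x * ((m : ℂ) - (i : ℂ))) ∧
          (∀ m : ℤ, i ≤ m → m ≤ j → k m = 0) ∧
          (∀ m : ℤ, j ≤ m → k m = y * ((m : ℂ) - (j : ℂ))))) := by
  refine ⟨fun hk => ?_, ?_⟩
  · by_cases hzero : ∃ n, k n = 0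
    · obtain ⟨n, hn⟩ := hzero
      exact Or.inr (IsKlyachkoSolution.exists_linear_vanishing_linear_of_eq_zero hk hn)
    · exact Or.inl ⟨_, _, eq_affine_of_sub_eq_sub fun m =>
        IsKlyachkoSolution.sub_eq_sub hk fun h => hzero ⟨m, h⟩⟩
  · rintro (⟨a, b, h⟩ | ⟨i, j, -, x, y, hleft, hzero, hright⟩) m
    · exact klyachko_eq_of_affine_near a b fun l _ _ => h l
    rcases lt_or_ge m i with hmi | him
    · exact klyachko_eq_of_affine_near x (-x * i) fun l _ _ => by rw [hleft l (by omega)]; ring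
    rcases le_or_gt m j with hmj | hjm
    · rw [hzero m him hmj, zero_mul]
    · exact klyachko_eq_of_affine_near y (-y * j) fun l _ _ => by rw [hright l (by omega)]; ring
end

section
/- Let J ⊂ ℤ be a finite set with no two elements adjacent (|j − j'| ≥ 2 for distinct j, j' ∈ J), and let K ⊆ J. Then the following identity holds in ℤ[q]: Σ_{P} Σ_{R} Σ_{A} q^{comaj(P) + comaj(R) + inv(A)} = Σ_{W} q^{comaj(W)}, where P ranges over all enumerations of J∖K, R over all enumerations of K, A over all shuffle patterns for lengths (|J∖K|, |K|), and W over all enumerations of J. That is, the statistic comaj(P)+comaj(R)+inv(A) on shuffles of enumerations of J∖K and K is equidistributed with comaj on enumerations of J. -/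
/-- `comaj` of a word: the sum of the (1-indexed) positions `j` with `q_j < q_{j+1}`. -/
def comajZ (Q : List ℤ) : ℕ :=
  ∑ j ∈ Finset.range (Q.length - 1), if Q.getD j 0 < Q.getD (j + 1) 0 then j + 1 else 0

/-- The number of inversions of a shuffle pattern `A ⊆ {1, …, n}`:
`#{(j,k) : j ∈ A, k ∈ {1,…,n} \ A, k < j}`. -/
def invStat (n : ℕ) (A : Finset ℕ) : ℕ :=
  ((A ×ˢ (Finset.Icc 1 n \ A)).filter fun p => p.2 < p.1).card

/-!
Both sides are products of q-factorials. Inserting the least letter `m` of a word `w` of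
length `n` at each of the `n + 1` positions changes `comaj` into `comaj w + k` for each
`k = 0, …, n` once, so `comaj` on the enumerations of an `n`-set has generating function
`[n]_q!`. Splitting the shuffle patterns `A ⊆ {1, …, n + 1}` according to whether
`n + 1 ∈ A` gives the q-Pascal recursion for `∑_A q^inv(A)`, whence
`[p]_q! [r]_q! ∑_A q^inv(A) = [p + r]_q!`.
-/

open Finset Polynomial

noncomputable def qInt (n : ℕ) : ℤ[X] := ∑ i ∈ range n, X ^ i

noncomputable def qFactorial (n : ℕ) : ℤ[X] := ∏ i ∈ range n, qInt (i + 1)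

lemma qInt_succ (n : ℕ) : qInt (n + 1) = X * qInt n + 1 := geom_sum_succ

lemma qInt_succ' (n : ℕ) : qInt (n + 1) = qInt n + X ^ n := sum_range_succ _ n

lemma qInt_add (p r : ℕ) : qInt (p + r) = qInt r + X ^ r * qInt p := by
  simp only [qInt, add_comm p r, sum_range_add, pow_add, mul_sum]

lemma qFactorial_zero : qFactorial 0 = 1 := prod_range_zero _

lemma qFactorial_succ (n : ℕ) : qFactorial (n + 1) = qFactorial n * qInt (n + 1) :=
  prod_range_succ _ n

lemma comajZ_append_singleton (u : List ℤ) (x : ℤ) :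
    comajZ (u ++ [x]) = comajZ u + if u.getD (u.length - 1) 0 < x then u.length else 0 := by
  rcases eq_or_ne u [] with rfl | hu
  · simp [comajZ]
  obtain ⟨L, hL⟩ : ∃ L, u.length = L + 1 := Nat.exists_eq_succ_of_ne_zero (by simpa using hu)
  simp only [comajZ, List.length_append, List.length_singleton, hL, Nat.add_sub_cancel,
    sum_range_succ]
  congr 1
  · refine sum_congr rfl fun j hj => ?_
    rw [mem_range] at hj
    rw [List.getD_append _ _ _ _ (by omega), List.getD_append _ _ _ _ (by omega)]
  · rw [List.getD_append _ _ _ _ (by omega), List.getD_append_right _ _ _ _ (by omega), hL]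
    simp

lemma comajZ_append_singleton_of_forall_lt {u : List ℤ} {m : ℤ} (hm : ∀ y ∈ u, m < y) :
    comajZ (u ++ [m]) = comajZ u := by
  rcases eq_or_ne u [] with rfl | hu
  · simp [comajZ]
  have hlast : u.getD (u.length - 1) 0 ∈ u := by
    rw [List.getD_eq_getElem _ _ (by simpa [Nat.pos_iff_ne_zero] using hu)]
    exact List.getElem_mem _
  rw [comajZ_append_singleton, if_neg (hm _ hlast).not_gt, add_zero]

lemma insertIdx_append_singleton {α : Type*} (m x : α) :
    ∀ (l : List α) {i : ℕ}, i ≤ l.length →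
      (l ++ [x]).insertIdx i m = l.insertIdx i m ++ [x]
  | _, 0, _ => by simp
  | b :: t, i + 1, h => by
    simp [List.insertIdx_succ_cons, insertIdx_append_singleton m x t (by simpa using h)]
  | [], _ + 1, h => by simp at h

lemma getD_insertIdx_length {α : Type*} {l : List α} {i : ℕ} (hi : i < l.length) (x d : α) :
    (l.insertIdx i x).getD l.length d = l.getD (l.length - 1) d := by
  rw [List.getD_eq_getElem?_getD, List.getD_eq_getElem?_getD,
    List.getElem?_insertIdx_of_gt hi]

lemma sum_X_pow_comajZ_insertIdx_of_forall_lt {m : ℤ} {l : List ℤ} (hm : ∀ y ∈ l, m < y) :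
    ∑ i ∈ range (l.length + 1), (X : ℤ[X]) ^ comajZ (l.insertIdx i m)
      = X ^ comajZ l * qInt (l.length + 1) := by
  induction l using List.reverseRecOn with
  | nil => simp [comajZ, qInt]
  | append_singleton u x ih =>
    have hmu : ∀ y ∈ u, m < y := fun y hy => hm y (by simp [hy])
    have hmx : m < x := hm x (by simp)
    have ih' := ih hmu
    rw [sum_range_succ, List.insertIdx_length_self, comajZ_append_singleton_of_forall_lt hmu]
      at ih'
    have hlow : ∀ i ∈ range u.length, comajZ ((u ++ [x]).insertIdx i m)
        = comajZ (u.insertIdx i m) + if u.getD (u.length - 1) 0 < x then u.length + 1 else 0 := by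
      intro i hi
      rw [mem_range] at hi
      rw [insertIdx_append_singleton _ _ _ hi.le, comajZ_append_singleton,
        List.length_insertIdx_of_le_length hi.le, Nat.add_sub_cancel, getD_insertIdx_length hi]
    have hmid : comajZ ((u ++ [x]).insertIdx u.length m) = comajZ u + (u.length + 1) := by
      rw [insertIdx_append_singleton _ _ _ le_rfl, List.insertIdx_length_self,
        comajZ_append_singleton, comajZ_append_singleton_of_forall_lt hmu]
      simp [hmx]
    have htop : comajZ ((u ++ [x]).insertIdx (u.length + 1) m)
        = comajZ u + if u.getD (u.length - 1) 0 < x then u.length else 0 := by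
      rw [show u.length + 1 = (u ++ [x]).length by simp, List.insertIdx_length_self,
        comajZ_append_singleton_of_forall_lt hm, comajZ_append_singleton]
    rw [List.length_append, List.length_singleton, sum_range_succ, sum_range_succ,
      sum_congr rfl fun i hi => by rw [hlow i hi], hmid, htop, comajZ_append_singleton]
    simp only [pow_add, ← sum_mul]
    split_ifs
    · linear_combination X ^ (u.length + 1) * ih'
        - X ^ comajZ u * X ^ u.length * qInt_succ (u.length + 1)
    · linear_combination ih' - X ^ comajZ u * qInt_succ' (u.length + 1)

lemma sum_map_permutations'Aux {α M : Type*} [AddCommMonoid M] (f : List α → M) (x : α)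
    (s : List α) :
    ((s.permutations'Aux x).map f).sum = ∑ i ∈ range (s.length + 1), f (s.insertIdx i x) := by
  have h : s.permutations'Aux x = (List.range (s.length + 1)).map (s.insertIdx · x) :=
    List.ext_getElem (by simp) fun n _ _ => by simp [List.getElem_permutations'Aux]
  rw [h, List.map_map, ← List.sum_toFinset _ List.nodup_range, List.toFinset_range]
  rfl

lemma sum_map_permutations'_X_pow_comajZ {L : List ℤ} (hL : L.Pairwise (· < ·)) :
    (L.permutations'.map fun w => (X : ℤ[X]) ^ comajZ w).sum = qFactorial L.length := by
  induction L with
  | nil => simp [comajZ, qFactorial_zero]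
  | cons m t ih =>
    rw [List.pairwise_cons] at hL
    have hins : ∀ l ∈ t.permutations',
        ((l.permutations'Aux m).map fun w => (X : ℤ[X]) ^ comajZ w).sum
          = X ^ comajZ l * qInt (t.length + 1) := by
      intro l hl
      have hperm := List.mem_permutations'.1 hl
      rw [sum_map_permutations'Aux, ← hperm.length_eq,
        sum_X_pow_comajZ_insertIdx_of_forall_lt fun y hy => hL.1 y (hperm.subset hy)]
    simp only [List.permutations', List.flatMap, List.map_flatten, List.sum_flatten, List.map_map,
      Function.comp_def]
    rw [List.map_congr_left hins, List.sum_map_mul_right, ih hL.2, List.length_cons,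
      qFactorial_succ]

def enumerations (S : Finset ℤ) : Finset (List ℤ) := (S.sort).permutations.toFinset

lemma coe_enumerations (S : Finset ℤ) :
    (enumerations S : Set (List ℤ)) = {l | l.Nodup ∧ l.toFinset = S} := by
  ext l
  simp only [enumerations, List.coe_toFinset, Set.mem_ofPred_eq, List.mem_permutations]
  constructor
  · intro h
    refine ⟨h.nodup_iff.2 (sort_nodup _ _), ?_⟩
    rw [List.toFinset_eq_of_perm _ _ h, sort_toFinset]
  · rintro ⟨hnd, hS⟩
    exact List.perm_of_nodup_nodup_toFinset_eq hnd (sort_nodup _ _) (by rw [hS, sort_toFinset])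

lemma sum_enumerations_X_pow_comajZ (S : Finset ℤ) :
    ∑ W ∈ enumerations S, (X : ℤ[X]) ^ comajZ W = qFactorial #S := by
  rw [enumerations, List.sum_toFinset _ (List.nodup_permutations _ (sort_nodup _ _)),
    ((List.permutations_perm_permutations' _).map _).sum_eq,
    sum_map_permutations'_X_pow_comajZ (sortedLT_sort S).pairwise, length_sort]

section invStat

lemma invStat_empty (n : ℕ) : invStat n ∅ = 0 := by simp [invStat]

lemma invStat_Icc (n : ℕ) : invStat n (Icc 1 n) = 0 := by simp [invStat]

variable {n : ℕ} {A : Finset ℕ}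

lemma invStat_succ_of_subset (hA : A ⊆ Icc 1 n) : invStat (n + 1) A = invStat n A := by
  unfold invStat
  congr 1
  ext ⟨j, k⟩
  have hj : j ∈ A → j ≤ n := fun h => (mem_Icc.1 (hA h)).2
  simp only [mem_filter, mem_product, mem_sdiff, mem_Icc]
  grind

lemma invStat_succ_insert (hA : A ⊆ Icc 1 n) :
    invStat (n + 1) (insert (n + 1) A) = invStat n A + (n - #A) := by
  have hC : Icc 1 (n + 1) \ insert (n + 1) A = Icc 1 n \ A := by
    rw [← insert_Icc_right_eq_Icc_add_one (by omega), insert_sdiff_insert,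
      sdiff_insert_of_notMem (by simp)]
  have hsplit : ((insert (n + 1) A ×ˢ (Icc 1 n \ A)).filter fun p => p.2 < p.1)
      = ({n + 1} ×ˢ (Icc 1 n \ A)) ∪ ((A ×ˢ (Icc 1 n \ A)).filter fun p => p.2 < p.1) := by
    ext ⟨j, k⟩
    simp only [mem_filter, mem_product, mem_union, mem_insert, mem_sdiff, mem_Icc,
      mem_singleton]
    grind
  have hdisj : Disjoint ({n + 1} ×ˢ (Icc 1 n \ A))
      ((A ×ˢ (Icc 1 n \ A)).filter fun p => p.2 < p.1) := by
    rw [disjoint_left]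
    rintro ⟨j, k⟩ h h'
    simp only [mem_filter, mem_product, mem_singleton] at h h'
    simpa [h.1] using hA h'.1.1
  rw [invStat, hC, hsplit, card_union_of_disjoint hdisj, card_product, card_singleton,
    card_sdiff_of_subset hA, Nat.card_Icc, invStat]
  omega

end invStat

/-- The Gaussian binomial coefficient `[n choose p]_q`. -/
noncomputable def invGenPoly (n p : ℕ) : ℤ[X] :=
  ∑ A ∈ (Icc 1 n).powersetCard p, X ^ invStat n A

lemma invGenPoly_zero_right (n : ℕ) : invGenPoly n 0 = 1 := by
  simp [invGenPoly, invStat_empty]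

lemma invGenPoly_self (n : ℕ) : invGenPoly n n = 1 := by
  have := powersetCard_self (Icc 1 n)
  rw [Nat.card_Icc, Nat.add_sub_cancel] at this
  simp [invGenPoly, this, invStat_Icc]

lemma invGenPoly_succ_succ (n p : ℕ) :
    invGenPoly (n + 1) (p + 1) = invGenPoly n (p + 1) + X ^ (n - p) * invGenPoly n p := by
  have hn : n + 1 ∉ Icc 1 n := by simp
  have hdisj : Disjoint ((Icc 1 n).powersetCard (p + 1))
      (((Icc 1 n).powersetCard p).image (insert (n + 1))) := by
    simp only [disjoint_left, mem_powersetCard, mem_image, not_exists, not_and]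
    rintro A ⟨hA, -⟩ B - rfl
    exact hn (hA (mem_insert_self _ _))
  have hinj : Set.InjOn (insert (n + 1)) ((Icc 1 n).powersetCard p : Set (Finset ℕ)) := by
    intro B hB C hC h
    rw [mem_coe, mem_powersetCard] at hB hC
    rw [← erase_insert (fun h => hn (hB.1 h)), h, erase_insert (fun h => hn (hC.1 h))]
  rw [invGenPoly, ← insert_Icc_right_eq_Icc_add_one (by omega), powersetCard_succ_insert hn,
    sum_union hdisj, sum_image hinj, invGenPoly, invGenPoly, mul_sum]
  congr 1
  · refine sum_congr rfl fun A hA => ?_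
    rw [invStat_succ_of_subset (mem_powersetCard.1 hA).1]
  · refine sum_congr rfl fun B hB => ?_
    obtain ⟨hBsub, rfl⟩ := mem_powersetCard.1 hB
    rw [invStat_succ_insert hBsub, pow_add, mul_comm]

lemma qFactorial_mul_qFactorial_mul_invGenPoly (p r : ℕ) :
    qFactorial p * qFactorial r * invGenPoly (p + r) p = qFactorial (p + r) := by
  induction p generalizing r with
  | zero => simp [invGenPoly_zero_right, qFactorial_zero]
  | succ p ihp =>
    induction r with
    | zero => simp [invGenPoly_self, qFactorial_zero]
    | succ r ihr =>
      have hsplit : invGenPoly (p + 1 + (r + 1)) (p + 1)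
          = invGenPoly (p + 1 + r) (p + 1) + X ^ (r + 1) * invGenPoly (p + 1 + r) p := by
        rw [← add_assoc, invGenPoly_succ_succ, show p + 1 + r - p = r + 1 by omega]
      have ihp' : qFactorial p * qFactorial (r + 1) * invGenPoly (p + 1 + r) p
          = qFactorial (p + 1 + r) := by
        rw [add_right_comm]; exact ihp (r + 1)
      rw [hsplit, show p + 1 + (r + 1) = p + 1 + r + 1 by ring, qFactorial_succ (p + 1 + r),
        show p + 1 + r + 1 = (p + 1) + (r + 1) by ring, qInt_add]
      linear_combination qInt (r + 1) * ihr + X ^ (r + 1) * qInt (p + 1) * ihp'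
        + qFactorial (p + 1) * invGenPoly (p + 1 + r) (p + 1) * qFactorial_succ r
        + X ^ (r + 1) * qFactorial (r + 1) * invGenPoly (p + 1 + r) p * qFactorial_succ p

theorem comaj_shuffle_equidistribution_general
    (J K : Finset ℤ) (hK : K ⊆ J) :
    (∑ᶠ P ∈ {l : List ℤ | l.Nodup ∧ l.toFinset = J \ K},
      ∑ᶠ R ∈ {l : List ℤ | l.Nodup ∧ l.toFinset = K},
        ∑ A ∈ (Finset.Icc 1 ((J \ K).card + K.card)).powerset.filter
            (fun A => A.card = (J \ K).card),
          (Polynomial.X : Polynomial ℤ)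
            ^ (comajZ P + comajZ R + invStat ((J \ K).card + K.card) A))
      = ∑ᶠ W ∈ {l : List ℤ | l.Nodup ∧ l.toFinset = J},
          (Polynomial.X : Polynomial ℤ) ^ comajZ W := by
  simp only [← coe_enumerations, finsum_mem_coe_finset, ← powersetCard_eq_filter]
  calc _ = (∑ P ∈ enumerations (J \ K), (X : ℤ[X]) ^ comajZ P)
          * ((∑ R ∈ enumerations K, (X : ℤ[X]) ^ comajZ R)
            * invGenPoly (#(J \ K) + #K) #(J \ K)) := by
        rw [invGenPoly, sum_mul_sum, sum_mul_sum]
        simp only [pow_add, mul_sum, mul_assoc]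
    _ = qFactorial #J := by
        rw [sum_enumerations_X_pow_comajZ, sum_enumerations_X_pow_comajZ, ← mul_assoc,
          qFactorial_mul_qFactorial_mul_invGenPoly, card_sdiff_add_card_eq_card hK]
    _ = _ := (sum_enumerations_X_pow_comajZ J).symm

/-- Let `J ⊂ ℤ` be a finite set with no two elements adjacent, and `K ⊆ J`.  Then, over
all enumerations `P` of `J \ K`, `R` of `K`, and shuffle patterns `A`, the statistic
`comaj(P) + comaj(R) + inv(A)` is equidistributed with `comaj` on enumerations of `J`:
`Σ_{P,R,A} q^{comaj(P)+comaj(R)+inv(A)} = Σ_W q^{comaj(W)}` in `ℤ[q]`. -/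
theorem comaj_shuffle_equidistribution
    (J K : Finset ℤ) (hK : K ⊆ J)
    (hJ : ∀ j ∈ J, ∀ j' ∈ J, j ≠ j' → 2 ≤ |j - j'|) :
    (∑ᶠ P ∈ {l : List ℤ | l.Nodup ∧ l.toFinset = J \ K},
      ∑ᶠ R ∈ {l : List ℤ | l.Nodup ∧ l.toFinset = K},
        ∑ A ∈ (Finset.Icc 1 ((J \ K).card + K.card)).powerset.filter
            (fun A => A.card = (J \ K).card),
          (Polynomial.X : Polynomial ℤ)
            ^ (comajZ P + comajZ R + invStat ((J \ K).card + K.card) A))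
      = ∑ᶠ W ∈ {l : List ℤ | l.Nodup ∧ l.toFinset = J},
          (Polynomial.X : Polynomial ℤ) ^ comajZ W :=
  comaj_shuffle_equidistribution_general J K hK
end
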